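/- arXiv:1712.06215 — 3 statements merged into one kernel-verified Lean document; each statement's English description precedes it below -/
import Mathlib

section
/- If 0 < φ₁ < 1, φ₂ > 0, and φ₁φ₂ < 1, then (1−φ₁)²·(1+φ₁+φ₁²−φ₁φ₂−φ₁²φ₂) + φ₁³φ₂²·(1−φ₁φ₂)·(1−φ₂) > 0. -/
theorem stmt_4 (φ₁ φ₂ : ℝ) (h₁ : 0 < φ₁) (h₁' : φ₁ < 1) (h₂ : 0 < φ₂)
    (h₃ : φ₁ * φ₂ < 1) :
    0 < (1 - φ₁)^2 * (1 + φ₁ + φ₁^2 - φ₁*φ₂ - φ₁^2*φ₂)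
      + φ₁^3 * φ₂^2 * (1 - φ₁*φ₂) * (1 - φ₂) := by
  rcases le_or_gt φ₂ 1 with h | h
  · have hA : 0 < (1 - φ₁)^2 * (1 + φ₁ + φ₁^2 - φ₁*φ₂ - φ₁^2*φ₂) := by
      apply mul_pos (by nlinarith [sq_nonneg (1-φ₁)])
      nlinarith [mul_nonneg h₁.le (sub_nonneg.2 h), mul_nonneg (mul_nonneg h₁.le h₁.le) (sub_nonneg.2 h)]
    have hB : 0 ≤ φ₁ ^ 3 * φ₂ ^ 2 * (1 - φ₁*φ₂) * (1 - φ₂) := by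
      apply mul_nonneg (mul_nonneg (by positivity) (by linarith)) (by linarith)
    linarith
  · have hA : 0 ≤ (1 - φ₁*φ₂)^2 * ((1-φ₁)*(1+φ₁*φ₂) + φ₁^2*φ₂^2) := by
      apply mul_nonneg (sq_nonneg _)
      have : 0 ≤ (1-φ₁)*(1+φ₁*φ₂) := by
        apply mul_nonneg (by linarith)
        nlinarith
      nlinarith [sq_nonneg (φ₁*φ₂)]
    have hB : 0 < φ₁^3 * (φ₂ - 1) * (1 - φ₁) :=
      mul_pos (mul_pos (by positivity) (by linarith)) (by linarith)
    nlinarith [hA, hB]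
end

section
/- Let c > 0 and M ≥ 0 be constants, and let Φ : (0,1) → ℝ be differentiable with Φ′(x) = b(x)·Φ(x) for all x ∈ (0,1), where b : (0,1) → ℝ is continuous and satisfies b(x) ≤ M + c/x for all x ∈ (0,1). If Φ(x)/x^c → 0 as x → 0⁺, then Φ(x) = 0 for all x ∈ (0,1). -/
/-! The weighted function `G x = Φ x / x ^ c * exp (-M x)` satisfies `G' = (b - c / x - M) G`,
and the bound on `b` makes this coefficient nonpositive, so `G ^ 2` is antitone on `(0, 1)`.
By hypothesis `G → 0` at `0⁺`, hence `G ^ 2 ≤ 0`, i.e. `G = 0`, and so `Φ = 0`. -/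

open Set Filter Topology Real

theorem Convex.antitoneOn_sq_of_hasDerivAt_mul_of_nonpos {s : Set ℝ} (hs : Convex ℝ s)
    {f β : ℝ → ℝ} (hf : ∀ t ∈ s, HasDerivAt f (β t * f t) t) (hβ : ∀ t ∈ s, β t ≤ 0) :
    AntitoneOn (fun t => f t ^ 2) s := by
  have hsq : ∀ t ∈ s, HasDerivAt (fun t => f t ^ 2) (2 * β t * f t ^ 2) t := fun t ht =>
    ((hf t ht).fun_pow 2).congr_deriv (by push_cast; ring)
  refine antitoneOn_of_hasDerivWithinAt_nonpos hs
    (fun t ht => (hsq t ht).continuousAt.continuousWithinAt)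
    (fun t ht => (hsq t (interior_subset ht)).hasDerivWithinAt) fun t ht => ?_
  have := hβ t (interior_subset ht)
  have := sq_nonneg (f t)
  nlinarith

theorem hasDerivAt_div_rpow_mul_exp {Φ : ℝ → ℝ} {c M t φ' : ℝ} (ht : 0 < t)
    (hΦ : HasDerivAt Φ φ' t) :
    HasDerivAt (fun s => Φ s / s ^ c * exp (-M * s))
      ((φ' - (c / t + M) * Φ t) / t ^ c * exp (-M * t)) t := by
  have hpow : HasDerivAt (fun s => s ^ c) (c * (t ^ c / t)) t := by
    simpa [rpow_sub_one ht.ne'] using hasDerivAt_rpow_const (p := c) (Or.inl ht.ne')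
  have hexp : HasDerivAt (fun s => exp (-M * s)) (exp (-M * t) * -M) t := by
    simpa using ((hasDerivAt_id t).const_mul (-M)).exp
  refine ((hΦ.fun_div hpow (rpow_pos_of_pos ht c).ne').fun_mul hexp).congr_deriv ?_
  field_simp
  ring

theorem Filter.Tendsto.mul_exp_neg_mul_nhdsGT_zero {f : ℝ → ℝ} (M : ℝ)
    (hf : Tendsto f (𝓝[>] 0) (𝓝 0)) :
    Tendsto (fun x => f x * Real.exp (-M * x)) (𝓝[>] 0) (𝓝 0) := by
  have hexp : Continuous fun x : ℝ => Real.exp (-M * x) := by fun_prop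
  simpa using hf.mul ((hexp.tendsto' 0 1 (by simp)).mono_left nhdsWithin_le_nhds)

theorem stmt_13_general (c M : ℝ) (Φ b : ℝ → ℝ)
    (hbound : ∀ x ∈ Set.Ioo (0:ℝ) 1, b x ≤ M + c / x)
    (hΦ : ∀ x ∈ Set.Ioo (0:ℝ) 1, HasDerivAt Φ (b x * Φ x) x)
    (hlim : Filter.Tendsto (fun x => Φ x / x ^ c)
      (nhdsWithin 0 (Set.Ioi 0)) (nhds 0)) :
    ∀ x ∈ Set.Ioo (0:ℝ) 1, Φ x = 0 := by
  set G : ℝ → ℝ := fun t => Φ t / t ^ c * exp (-M * t)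
  have hanti : AntitoneOn (fun t => G t ^ 2) (Ioo 0 1) := by
    refine (convex_Ioo 0 1).antitoneOn_sq_of_hasDerivAt_mul_of_nonpos
      (β := fun t => b t - (c / t + M)) (fun t ht => ?_) fun t ht => by linarith [hbound t ht]
    convert hasDerivAt_div_rpow_mul_exp ht.1 (hΦ t ht) using 1
    simp only [G]
    ring
  have hG0 : Tendsto (fun t => G t ^ 2) (𝓝[>] 0) (𝓝 0) := by
    simpa only [zero_pow two_ne_zero] using (hlim.mul_exp_neg_mul_nhdsGT_zero M).pow 2
  intro x hx
  have hGx : G x ^ 2 ≤ 0 := by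
    refine ge_of_tendsto hG0 ?_
    filter_upwards [Ioo_mem_nhdsGT hx.1] with t ht
    exact hanti ⟨ht.1, ht.2.trans hx.2⟩ hx ht.2.le
  have hG : G x = 0 := pow_eq_zero_iff two_ne_zero |>.mp (le_antisymm hGx (sq_nonneg _))
  simpa [G, (rpow_pos_of_pos hx.1 c).ne', exp_ne_zero] using hG

theorem stmt_13 (c M : ℝ) (hc : 0 < c) (hM : 0 ≤ M) (Φ b : ℝ → ℝ)
    (hb : ContinuousOn b (Set.Ioo (0:ℝ) 1))
    (hbound : ∀ x ∈ Set.Ioo (0:ℝ) 1, b x ≤ M + c / x)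
    (hΦ : ∀ x ∈ Set.Ioo (0:ℝ) 1, HasDerivAt Φ (b x * Φ x) x)
    (hlim : Filter.Tendsto (fun x => Φ x / x ^ c)
      (nhdsWithin 0 (Set.Ioi 0)) (nhds 0)) :
    ∀ x ∈ Set.Ioo (0:ℝ) 1, Φ x = 0 :=
  stmt_13_general c M Φ b hbound hΦ hlim
end

section
/- Let y₁, y₂, y₃ : [0,1] → ℝ be continuously twice differentiable functions such that for all x ∈ (0,1): y₁″(x) − x⁻¹·(1+3x²)·(1−x²)⁻¹·y₁′(x) + (1/6)·(y₁′(x))² + (1/3)·((y₂′(x))² + y₂′(x)·y₃′(x) + (y₃′(x))²) = 0. If there exists x₁ ∈ (0,1) with y₁′(x₁) = 0, then y₁′(x) = 0 for all x ∈ [x₁, 1]. -/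
/-!
Multiplying the equation by the integrating factor `x⁻¹ (1 - x²)²` puts it in the divergence form
`(x⁻¹ (1 - x²)² y₁')' = -x⁻¹ (1 - x²)² Q`, where `Q = (y₁')²/6 + ((y₂')² + y₂'y₃' + (y₃')²)/3 ≥ 0`.
Hence `w = x⁻¹ (1 - x²)² y₁'` is antitone on `[x₁, 1]`; it vanishes at `x₁` by assumption and at `1`
because the integrating factor does, so `w ≡ 0` there. Thus `y₁' = 0` on `[x₁, 1)`, and at `1`
by continuity.
-/

open Set

noncomputable section

namespace BergerSphere

def integratingFactor (x : ℝ) : ℝ := x⁻¹ * (1 - x ^ 2) ^ 2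

@[simp]
lemma integratingFactor_one : integratingFactor 1 = 0 := by
  norm_num [integratingFactor]

lemma integratingFactor_pos {x : ℝ} (hx : x ∈ Ioo 0 1) : 0 < integratingFactor x := by
  obtain ⟨hx₀, hx₁⟩ := hx
  have : 0 < 1 - x ^ 2 := by nlinarith
  unfold integratingFactor
  positivity

lemma continuousOn_integratingFactor : ContinuousOn integratingFactor (Ioi 0) :=
  (continuousOn_inv₀.mono fun _ hx => (mem_Ioi.mp hx).ne').mul (by fun_prop)

lemma hasDerivAt_integratingFactor_mul {f : ℝ → ℝ} {f' x : ℝ} (hx₀ : x ≠ 0)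
    (hx₁ : 1 - x ^ 2 ≠ 0) (hf : HasDerivAt f f' x) :
    HasDerivAt (fun t => integratingFactor t * f t)
      (integratingFactor x * (f' - x⁻¹ * (1 + 3 * x ^ 2) * (1 - x ^ 2)⁻¹ * f x)) x := by
  have hfactor : HasDerivAt integratingFactor
      (-(x ^ 2)⁻¹ * (1 - x ^ 2) ^ 2 + x⁻¹ * (2 * (1 - x ^ 2) * -(2 * x))) x := by
    have hpoly : HasDerivAt (fun t : ℝ => (1 - t ^ 2) ^ 2) (2 * (1 - x ^ 2) * -(2 * x)) x := by
      simpa using ((hasDerivAt_pow 2 x).const_sub 1).fun_pow 2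
    exact (hasDerivAt_inv hx₀).mul hpoly
  refine (hfactor.mul hf).congr_deriv ?_
  unfold integratingFactor
  field_simp
  ring

lemma antitoneOn_integratingFactor_mul {f f' : ℝ → ℝ} {a : ℝ} (ha : 0 < a)
    (hf : ∀ x ∈ Ioo a 1, HasDerivAt f (f' x) x) (hf_cont : ContinuousOn f (Icc a 1))
    (hsuper : ∀ x ∈ Ioo a 1, f' x - x⁻¹ * (1 + 3 * x ^ 2) * (1 - x ^ 2)⁻¹ * f x ≤ 0) :
    AntitoneOn (fun x => integratingFactor x * f x) (Icc a 1) := by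
  refine antitoneOn_of_hasDerivWithinAt_nonpos (convex_Icc a 1)
    (f' := fun x => integratingFactor x * (f' x - x⁻¹ * (1 + 3 * x ^ 2) * (1 - x ^ 2)⁻¹ * f x))
    ?_ ?_ ?_
  · exact (continuousOn_integratingFactor.mono fun x hx => lt_of_lt_of_le ha hx.1).mul hf_cont
  · rw [interior_Icc]
    intro x hx
    have hx₀ : 0 < x := ha.trans hx.1
    have hx₁ : 1 - x ^ 2 ≠ 0 := by nlinarith [hx.2]
    exact (hasDerivAt_integratingFactor_mul hx₀.ne' hx₁ (hf x hx)).hasDerivWithinAt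
  · rw [interior_Icc]
    intro x hx
    exact mul_nonpos_of_nonneg_of_nonpos
      (integratingFactor_pos ⟨ha.trans hx.1, hx.2⟩).le (hsuper x hx)

lemma eqOn_zero_of_antitoneOn {w : ℝ → ℝ} {a b : ℝ} (hw : AntitoneOn w (Icc a b))
    (ha : w a = 0) (hb : w b = 0) : EqOn w 0 (Icc a b) := by
  intro x hx
  have hab : a ≤ b := hx.1.trans hx.2
  have hle : w x ≤ w a := hw (left_mem_Icc.mpr hab) hx hx.1
  have hge : w b ≤ w x := hw hx (right_mem_Icc.mpr hab) hx.2
  simp only [Pi.zero_apply]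
  linarith

end BergerSphere

end

open BergerSphere in
theorem stmt_17_general (y₁' y₁'' y₂' y₃' : ℝ → ℝ)
    (hy₁' : ∀ x ∈ Set.Ioo (0:ℝ) 1, HasDerivAt y₁' (y₁'' x) x)
    (hc₁ : ContinuousOn y₁' (Set.Icc 0 1))
    (hODE : ∀ x ∈ Set.Ioo (0:ℝ) 1,
      y₁'' x - x⁻¹ * (1 + 3*x^2) * (1 - x^2)⁻¹ * y₁' x
        + (1/6) * (y₁' x)^2
        + (1/3) * ((y₂' x)^2 + y₂' x * y₃' x + (y₃' x)^2) = 0)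
    (x₁ : ℝ) (hx₁ : x₁ ∈ Set.Ioo (0:ℝ) 1) (hzero : y₁' x₁ = 0) :
    ∀ x ∈ Set.Icc x₁ 1, y₁' x = 0 := by
  obtain ⟨hx₁₀, hx₁₁⟩ := hx₁
  have hsub : ∀ x ∈ Ioo x₁ 1, x ∈ Ioo (0:ℝ) 1 := fun x hx => ⟨hx₁₀.trans hx.1, hx.2⟩
  have hcont : ContinuousOn y₁' (Icc x₁ 1) := hc₁.mono (Icc_subset_Icc_left hx₁₀.le)
  have hsuper : ∀ x ∈ Ioo x₁ 1,
      y₁'' x - x⁻¹ * (1 + 3 * x ^ 2) * (1 - x ^ 2)⁻¹ * y₁' x ≤ 0 := by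
    intro x hx
    have := hODE x (hsub x hx)
    nlinarith [sq_nonneg (y₁' x), sq_nonneg (y₂' x + y₃' x), sq_nonneg (y₂' x), sq_nonneg (y₃' x)]
  have hw_zero : EqOn (fun x => integratingFactor x * y₁' x) 0 (Icc x₁ 1) :=
    eqOn_zero_of_antitoneOn
      (antitoneOn_integratingFactor_mul hx₁₀ (fun x hx => hy₁' x (hsub x hx)) hcont hsuper)
      (by simp [hzero]) (by simp)
  have hy_zero : EqOn y₁' 0 (Ico x₁ 1) := fun x hx =>
    (mul_eq_zero.mp (hw_zero (Ico_subset_Icc_self hx))).resolve_left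
      (integratingFactor_pos ⟨hx₁₀.trans_le hx.1, hx.2⟩).ne'
  exact hy_zero.of_subset_closure hcont continuousOn_const Ico_subset_Icc_self
    (closure_Ico hx₁₁.ne).symm.subset

theorem stmt_17 (y₁ y₁' y₁'' y₂ y₂' y₃ y₃' : ℝ → ℝ)
    (hy₁ : ∀ x ∈ Set.Ioo (0:ℝ) 1, HasDerivAt y₁ (y₁' x) x)
    (hy₁' : ∀ x ∈ Set.Ioo (0:ℝ) 1, HasDerivAt y₁' (y₁'' x) x)
    (hy₂ : ∀ x ∈ Set.Ioo (0:ℝ) 1, HasDerivAt y₂ (y₂' x) x)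
    (hy₃ : ∀ x ∈ Set.Ioo (0:ℝ) 1, HasDerivAt y₃ (y₃' x) x)
    (hc₁ : ContinuousOn y₁' (Set.Icc 0 1))
    (hc₁' : ContinuousOn y₁'' (Set.Icc 0 1))
    (hc₂ : ContinuousOn y₂' (Set.Icc 0 1))
    (hc₃ : ContinuousOn y₃' (Set.Icc 0 1))
    (hODE : ∀ x ∈ Set.Ioo (0:ℝ) 1,
      y₁'' x - x⁻¹ * (1 + 3*x^2) * (1 - x^2)⁻¹ * y₁' x
        + (1/6) * (y₁' x)^2
        + (1/3) * ((y₂' x)^2 + y₂' x * y₃' x + (y₃' x)^2) = 0)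
    (x₁ : ℝ) (hx₁ : x₁ ∈ Set.Ioo (0:ℝ) 1) (hzero : y₁' x₁ = 0) :
    ∀ x ∈ Set.Icc x₁ 1, y₁' x = 0 :=
  stmt_17_general y₁' y₁'' y₂' y₃' hy₁' hc₁ hODE x₁ hx₁ hzero
end
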